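/- Let f(z) = Σ_{n≥0} a_n z^n be analytic on the unit disk with |f(z)| ≤ 1, and suppose a = |a_0| ≤ 0.489758. Then for |z| = r ≤ 1/(3-a), a² + Σ_{n≥1} |a_n| r^n + (1/(1+a) + r/(1-r)) Σ_{n≥1} |a_n|² r^{2n} + (9/8) Σ_{n≥1} n |a_n|² r^{2n} ≤ 1. -/

import Mathlib

/-!
Bessel's inequality for the Fourier series of the dilates `θ ↦ f (t e^{iθ})`, `t < 1`, gives
`∑ |a_n|² t^{2n} ≤ sup |f|² ≤ 1`; letting `t → 1`, `∑_{n ≥ 1} |a_n|² ≤ 1 - a²`. Since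
`r ≤ 1/(3 - a) ≤ 2/5`, the crude bounds `|a_n| r^n ≤ |a_n|²/4 + r^{2n}` and `n r^{2n} ≤ r²`
already bound the left-hand side by `a² + 0.7 (1 - a²) + 4/21 < 1`.
-/

open MeasureTheory AddCircle Complex Filter Topology

section Bessel

variable {T : ℝ} [Fact (0 < T)] {c : ℕ → ℂ} {g : C(AddCircle T, ℂ)}

theorem inner_fourierLp_toLp_of_hasSum (h : HasSum (fun m : ℕ => c m • fourier (m : ℤ)) g)
    (n : ℕ) : inner ℂ (fourierLp 2 (n : ℤ)) (g.toLp 2 haarAddCircle ℂ) = c n := by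
  have hL := (h.mapL (ContinuousMap.toLp 2 haarAddCircle ℂ)).mapL
    (innerSL ℂ (fourierLp (T := T) 2 (n : ℤ)))
  refine hL.unique ((hasSum_ite_eq n (c n)).congr_fun fun m => ?_)
  simp only [innerSL_apply_apply, map_smul]
  rw [orthonormal_iff_ite.mp orthonormal_fourier]
  rcases eq_or_ne m n with rfl | hmn
  · simp
  · simp [hmn, Ne.symm hmn]

theorem sum_range_sq_norm_le_of_hasSum_fourier
    (h : HasSum (fun m : ℕ => c m • fourier (m : ℤ)) g) (N : ℕ) :
    ∑ n ∈ Finset.range N, ‖c n‖ ^ 2 ≤ ‖g‖ ^ 2 := by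
  have hLp : ‖g.toLp 2 haarAddCircle ℂ‖ ≤ ‖g‖ := by
    refine ((ContinuousMap.toLp 2 haarAddCircle ℂ).le_opNorm g).trans ?_
    refine (mul_le_of_le_one_left (norm_nonneg g) ?_)
    refine (ContinuousMap.toLp_norm_le _).trans ?_
    simp [measureUnivNNReal]
  have hbessel := (orthonormal_fourier (T := T)).sum_inner_products_le
    (g.toLp 2 haarAddCircle ℂ) (s := (Finset.range N).map Nat.castEmbedding)
  simp only [Finset.sum_map, Nat.castEmbedding_apply, inner_fourierLp_toLp_of_hasSum h] at hbessel
  exact hbessel.trans (pow_le_pow_left₀ (norm_nonneg _) hLp 2)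

end Bessel

theorem summable_norm_mul_pow_of_summable {𝕜 : Type*} [NontriviallyNormedField 𝕜] {a : ℕ → 𝕜}
    {w : 𝕜} (hw : Summable fun n => a n * w ^ n) {t : ℝ} (ht0 : 0 ≤ t) (ht : t < ‖w‖) :
    Summable fun n => ‖a n‖ * t ^ n := by
  lift t to NNReal using ht0
  let p := FormalMultilinearSeries.ofScalars 𝕜 a
  have hw' : Tendsto (fun n => ‖p n‖ * (‖w‖₊ : ℝ) ^ n) atTop (𝓝 0) := by
    simpa [p, FormalMultilinearSeries.ofScalars_norm] using hw.tendsto_atTop_zero.norm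
  have hr := p.le_radius_of_tendsto hw'
  have htw : (t : ENNReal) < ‖w‖₊ := ENNReal.coe_lt_coe.mpr (by exact_mod_cast ht)
  simpa [p, FormalMultilinearSeries.ofScalars_norm] using p.summable_norm_mul_pow (htw.trans_le hr)

theorem norm_ofReal_mul_toCircle {T : ℝ} (t : ℝ) (x : AddCircle T) :
    ‖(t : ℂ) * toCircle x‖ = |t| := by
  simp [Circle.norm_coe]

section BoundedPowerSeries

variable {f : ℂ → ℂ} {a : ℕ → ℂ}

theorem exists_hasSum_fourier_eq_comp_toCircle {T : ℝ} [Fact (0 < T)]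
    (hf : ∀ z ∈ Metric.ball (0:ℂ) 1, HasSum (fun n => a n * z ^ n) (f z))
    {t : ℝ} (ht0 : 0 ≤ t) (ht1 : t < 1) :
    ∃ g : C(AddCircle T, ℂ), HasSum (fun m : ℕ => (a m * t ^ m) • fourier (m : ℤ)) g ∧
      ∀ x, g x = f (t * toCircle x) := by
  have hsum : Summable fun m : ℕ => (a m * t ^ m) • fourier (T := T) (m : ℤ) := by
    refine .of_norm ?_
    simp only [norm_smul, fourier_norm, mul_one, norm_mul, norm_pow, Complex.norm_real,
      Real.norm_eq_abs, abs_of_nonneg ht0]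
    have hw : ‖(((1 + t) / 2 : ℝ) : ℂ)‖ = (1 + t) / 2 := by
      rw [Complex.norm_real, Real.norm_of_nonneg (by positivity)]
    exact summable_norm_mul_pow_of_summable
      (hf _ (by rw [mem_ball_zero_iff, hw]; linarith)).summable ht0 (by rw [hw]; linarith)
  refine ⟨_, hsum.hasSum, fun x => ?_⟩
  have hx := hsum.hasSum.map (ContinuousMap.evalCLM ℂ x) (ContinuousMap.evalCLM ℂ x).continuous
  refine hx.unique ?_
  have hx_mem : (t : ℂ) * toCircle x ∈ Metric.ball (0 : ℂ) 1 := by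
    rwa [mem_ball_zero_iff, norm_ofReal_mul_toCircle, abs_of_nonneg ht0]
  convert hf _ hx_mem using 2 with m
  simp [fourier_apply, toCircle_nsmul, mul_pow, mul_assoc]

theorem sum_range_sq_norm_le_one_of_norm_le_one
    (hf : ∀ z ∈ Metric.ball (0:ℂ) 1, HasSum (fun n => a n * z ^ n) (f z))
    (hb : ∀ z ∈ Metric.ball (0:ℂ) 1, ‖f z‖ ≤ 1) (N : ℕ) :
    ∑ n ∈ Finset.range N, ‖a n‖ ^ 2 ≤ 1 := by
  have hdilate : ∀ t ∈ Set.Ico (0:ℝ) 1, ∑ n ∈ Finset.range N, ‖a n * (t : ℂ) ^ n‖ ^ 2 ≤ 1 := by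
    rintro t ⟨ht0, ht1⟩
    have : Fact ((0:ℝ) < 1) := ⟨one_pos⟩
    obtain ⟨g, hg, hgf⟩ := exists_hasSum_fourier_eq_comp_toCircle (T := 1) hf ht0 ht1
    have hg1 : ‖g‖ ≤ 1 := (ContinuousMap.norm_le _ zero_le_one).2 fun x => hgf x ▸
      hb _ (by rwa [mem_ball_zero_iff, norm_ofReal_mul_toCircle, abs_of_nonneg ht0])
    exact (sum_range_sq_norm_le_of_hasSum_fourier hg N).trans (pow_le_one₀ (norm_nonneg g) hg1)
  have hlim : Tendsto (fun t : ℝ => ∑ n ∈ Finset.range N, ‖a n * (t : ℂ) ^ n‖ ^ 2)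
      (𝓝[<] 1) (𝓝 (∑ n ∈ Finset.range N, ‖a n‖ ^ 2)) := by
    have hcont : Continuous fun t : ℝ => ∑ n ∈ Finset.range N, ‖a n * (t : ℂ) ^ n‖ ^ 2 := by
      fun_prop
    simpa using (hcont.tendsto 1).mono_left nhdsWithin_le_nhds
  exact le_of_tendsto hlim (eventually_of_mem (Ico_mem_nhdsLT zero_lt_one) hdilate)

end BoundedPowerSeries

theorem succ_mul_pow_succ_le {q : ℝ} (hq0 : 0 ≤ q) (hq : q ≤ 1 / 2) (n : ℕ) :
    ((n : ℝ) + 1) * q ^ (n + 1) ≤ q := by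
  have hn : ((n : ℝ) + 1) * q ^ n ≤ 1 :=
    calc ((n : ℝ) + 1) * q ^ n ≤ 2 ^ n * (1 / 2) ^ n := by
          gcongr
          exact_mod_cast Nat.lt_two_pow_self
      _ = 1 := by rw [← mul_pow]; norm_num
  calc ((n : ℝ) + 1) * q ^ (n + 1) = (((n : ℝ) + 1) * q ^ n) * q := by ring
    _ ≤ q := mul_le_of_le_one_left hq0 hn

theorem tsum_mul_le_mul_tsum {b w : ℕ → ℝ} {C : ℝ} (hb : ∀ n, 0 ≤ b n) (hs : Summable b)
    (hw0 : ∀ n, 0 ≤ w n) (hwC : ∀ n, w n ≤ C) : ∑' n, b n * w n ≤ C * ∑' n, b n := by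
  have hle : ∀ n, b n * w n ≤ C * b n := fun n => by nlinarith [hb n, hwC n]
  rw [← tsum_mul_left]
  exact (hs.mul_left C).of_nonneg_of_le (fun n => mul_nonneg (hb n) (hw0 n)) hle
    |>.tsum_le_tsum hle (hs.mul_left C)

theorem tsum_mul_pow_succ_le {b : ℕ → ℝ} (hb0 : ∀ n, 0 ≤ b n)
    (hb : Summable fun n => b n ^ 2) {r : ℝ} (hr0 : 0 ≤ r) (hr1 : r < 1) :
    ∑' n, b n * r ^ (n + 1) ≤ (∑' n, b n ^ 2) / 4 + r ^ 2 / (1 - r ^ 2) := by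
  have hq1 : r ^ 2 < 1 := by nlinarith
  have hgeom : Summable fun n : ℕ => (r ^ 2) ^ (n + 1) :=
    (summable_nat_add_iff 1).mpr (summable_geometric_of_lt_one (by positivity) hq1)
  have hgeom_sum : ∑' n : ℕ, (r ^ 2) ^ (n + 1) = r ^ 2 / (1 - r ^ 2) := by
    rw [tsum_congr fun n => pow_succ' (r ^ 2) n, tsum_mul_left,
      tsum_geometric_of_lt_one (by positivity) hq1, div_eq_mul_inv]
  have hle : ∀ n, b n * r ^ (n + 1) ≤ b n ^ 2 / 4 + (r ^ 2) ^ (n + 1) := fun n => by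
    rw [← pow_mul, mul_comm 2, pow_mul]
    nlinarith [sq_nonneg (b n - 2 * r ^ (n + 1))]
  have hmaj : Summable fun n => b n ^ 2 / 4 + (r ^ 2) ^ (n + 1) := (hb.div_const 4).add hgeom
  calc ∑' n, b n * r ^ (n + 1) ≤ ∑' n, (b n ^ 2 / 4 + (r ^ 2) ^ (n + 1)) :=
        (hmaj.of_nonneg_of_le (fun n => by have := hb0 n; positivity) hle).tsum_le_tsum hle hmaj
    _ = (∑' n, b n ^ 2) / 4 + r ^ 2 / (1 - r ^ 2) := by
        rw [(hb.div_const 4).tsum_add hgeom, tsum_div_const, hgeom_sum]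

theorem refined_bohr_bound {A r P S₁ S₂ S₃ : ℝ} (hA0 : 0 ≤ A) (hA : A ≤ 1 / 2) (hr0 : 0 ≤ r)
    (hr : r ≤ 2 / 5) (hP0 : 0 ≤ P) (hP : P ≤ 1 - A ^ 2) (h₁ : S₁ ≤ P / 4 + r ^ 2 / (1 - r ^ 2))
    (h₂0 : 0 ≤ S₂) (h₂ : S₂ ≤ r ^ 2 * P) (h₃ : S₃ ≤ r ^ 2 * P) :
    A ^ 2 + S₁ + (1 / (1 + A) + r / (1 - r)) * S₂ + 9 / 8 * S₃ ≤ 1 := by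
  have hq : r ^ 2 ≤ 4 / 25 := by nlinarith
  have hgeom : r ^ 2 / (1 - r ^ 2) ≤ 4 / 21 := by
    rw [div_le_iff₀ (by linarith)]; linarith
  have hC : 1 / (1 + A) + r / (1 - r) ≤ 5 / 3 := by
    have h1 : 1 / (1 + A) ≤ 1 := by rw [div_le_one (by linarith)]; linarith
    have h2 : r / (1 - r) ≤ 2 / 3 := by rw [div_le_iff₀ (by linarith)]; linarith
    linarith
  have hqP : r ^ 2 * P ≤ 4 / 25 * P := by nlinarith
  nlinarith [mul_le_mul hC h₂ h₂0 (by norm_num : (0:ℝ) ≤ 5 / 3)]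

theorem improved_refined_bohr_lambda_nine_eighths
    (f : ℂ → ℂ) (a : ℕ → ℂ)
    (hf : ∀ z ∈ Metric.ball (0:ℂ) 1, HasSum (fun n => a n * z ^ n) (f z))
    (hb : ∀ z ∈ Metric.ball (0:ℂ) 1, ‖f z‖ ≤ 1)
    (ha : ‖a 0‖ ≤ 0.489758)
    (z : ℂ) (hz : ‖z‖ ≤ 1 / (3 - ‖a 0‖)) :
    ‖a 0‖ ^ 2
      + (∑' n : ℕ, ‖a (n+1)‖ * ‖z‖ ^ (n+1))
      + (1 / (1 + ‖a 0‖) + ‖z‖ / (1 - ‖z‖))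
          * (∑' n : ℕ, ‖a (n+1)‖ ^ 2 * ‖z‖ ^ (2*(n+1)))
      + (9/8) * (∑' n : ℕ, ((n:ℝ)+1) * ‖a (n+1)‖ ^ 2
                    * ‖z‖ ^ (2*(n+1))) ≤ 1 := by
  have hA : ‖a 0‖ ≤ 1 / 2 := ha.trans (by norm_num)
  have hr : ‖z‖ ≤ 2 / 5 := hz.trans (by rw [div_le_iff₀ (by linarith)]; linarith)
  have hr1 : ‖z‖ < 1 := by linarith
  have htail : ∀ N, ∑ n ∈ Finset.range N, ‖a (n + 1)‖ ^ 2 ≤ 1 - ‖a 0‖ ^ 2 := fun N => by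
    have := sum_range_sq_norm_le_one_of_norm_le_one hf hb (N + 1)
    rw [Finset.sum_range_succ'] at this
    linarith
  have hsum : Summable fun n => ‖a (n + 1)‖ ^ 2 :=
    summable_of_sum_range_le (fun n => by positivity) htail
  have hweight : ∀ n : ℕ, ((n : ℝ) + 1) * ‖z‖ ^ (2 * (n + 1)) ≤ ‖z‖ ^ 2 := fun n => by
    rw [pow_mul]
    exact succ_mul_pow_succ_le (by positivity) (by nlinarith [norm_nonneg z]) n
  have hS₃ : ∑' n : ℕ, ((n : ℝ) + 1) * ‖a (n + 1)‖ ^ 2 * ‖z‖ ^ (2 * (n + 1))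
      ≤ ‖z‖ ^ 2 * ∑' n : ℕ, ‖a (n + 1)‖ ^ 2 := by
    simp_rw [mul_comm ((_ : ℝ) + 1), mul_assoc]
    exact tsum_mul_le_mul_tsum (fun n => by positivity) hsum (fun n => by positivity) hweight
  exact refined_bohr_bound (norm_nonneg _) hA (norm_nonneg _) hr
    (tsum_nonneg fun n => by positivity)
    (Real.tsum_le_of_sum_range_le (fun n => by positivity) htail)
    (tsum_mul_pow_succ_le (fun n => norm_nonneg _) hsum (norm_nonneg _) hr1)
    (tsum_nonneg fun n => by positivity)
    (tsum_mul_le_mul_tsum (fun n => by positivity) hsum (fun n => by positivity)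
      fun n => pow_le_pow_of_le_one (norm_nonneg _) hr1.le (by omega)) hS₃
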